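/- arXiv:1105.3022 — 3 statements merged into one kernel-verified Lean document; each statement's English description precedes it below -/
import Mathlib

section
/- For every integer m ≥ 1 and every n ∈ ℕ, the determinantal identity Ψ_m(ΔS)_n · Ψ_m(Δ³S)_{n+1} − Ψ_m(ΔS)_{n+1} · Ψ_m(Δ³S)_n = Ψ_{m+1}(ΔS)_n · Ψ_{m−1}(Δ³S)_{n+1} holds. (This is the bilinear relation F_k^n F_{k+2}^{n+1} − F_k^{n+1} F_{k+2}^n = F_{k+3}^n F_{k−1}^{n+1} of the lattice Boussinesq molecule solution in the case k = 3m+1.) -/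
/-- Forward difference operator: `(Δ v) n = v (n+1) - v n`. -/
def Δ (v : ℕ → ℝ) : ℕ → ℝ := fun n => v (n + 1) - v n

/-- `Psi k v n` is the determinant of the `k × k` matrix whose `(i, j)` entry is
`(Δ^[2*i] v) (n + j)`.  For `k = 0` this is the empty determinant `1`. -/
noncomputable def Psi (k : ℕ) (v : ℕ → ℝ) (n : ℕ) : ℝ :=
  (Matrix.of fun i j : Fin k => (Δ^[2 * i.val] v) (n + j.val)).det

/-!
Jacobi's complementary minor theorem says that a `p × p` minor of `adj N` equals
`det N ^ (p - 1)` times the complementary minor of `N`: with `P` the identity matrix whose first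
`p` columns are replaced by those of `adj N`, the product `N * P` is block upper triangular with
diagonal blocks `det N • 1` and the complementary block of `N`, which gives the identity after
multiplication by `det N`, and the factor cancels for the generic matrix. For `p = 2` and the
corner minors this is the Desnanot–Jacobi (Dodgson condensation) identity.

The matrix defining `Ψ_{m+1}(ΔS)_n` has the matrices of `Ψ_m(ΔS)_n`, `Ψ_m(ΔS)_{n+1}`,
`Ψ_m(Δ³S)_n`, `Ψ_m(Δ³S)_{n+1}` as its four corner `m × m` blocks and that of
`Ψ_{m-1}(Δ³S)_{n+1}` as its interior: dropping the first row turns `v` into `Δ² v`, dropping the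
first column turns `n` into `n + 1`. The claimed identity is Desnanot–Jacobi for this matrix.
-/

open Matrix

section Jacobi

variable {R ι κ : Type*} [CommRing R] [Fintype ι] [Fintype κ] [DecidableEq ι] [DecidableEq κ]

theorem Matrix.det_mul_det_toBlocks₁₁_adjugate (N : Matrix (ι ⊕ κ) (ι ⊕ κ) R) :
    N.det * N.adjugate.toBlocks₁₁.det = N.det ^ Fintype.card ι * N.toBlocks₂₂.det := by
  have hNA := N.mul_adjugate
  rw [← fromBlocks_toBlocks N.adjugate] at hNA
  nth_rw 1 [← fromBlocks_toBlocks N] at hNA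
  rw [fromBlocks_multiply, ← fromBlocks_one, fromBlocks_smul, fromBlocks_inj] at hNA
  obtain ⟨h₁₁, -, h₂₁, -⟩ := hNA
  have hmul : N * fromBlocks N.adjugate.toBlocks₁₁ 0 N.adjugate.toBlocks₂₁ 1 =
      fromBlocks (N.det • 1) N.toBlocks₁₂ 0 N.toBlocks₂₂ := by
    nth_rw 1 [← fromBlocks_toBlocks N]
    rw [fromBlocks_multiply, h₁₁, h₂₁, smul_zero]
    simp
  have := congrArg det hmul
  rwa [det_mul, det_fromBlocks_zero₁₂, det_fromBlocks_zero₂₁, det_smul, det_one, det_one,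
    mul_one, mul_one] at this

theorem Matrix.det_toBlocks₁₁_adjugate [Nonempty ι] (N : Matrix (ι ⊕ κ) (ι ⊕ κ) R) :
    N.adjugate.toBlocks₁₁.det = N.det ^ (Fintype.card ι - 1) * N.toBlocks₂₂.det := by
  let X := mvPolynomialX (ι ⊕ κ) (ι ⊕ κ) ℤ
  have hX : X.adjugate.toBlocks₁₁.det = X.det ^ (Fintype.card ι - 1) * X.toBlocks₂₂.det := by
    refine mul_left_cancel₀ (det_mvPolynomialX_ne_zero (ι ⊕ κ) ℤ) ?_
    rw [det_mul_det_toBlocks₁₁_adjugate, ← mul_assoc, ← pow_succ',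
      Nat.sub_add_cancel Fintype.card_pos]
  let f : MvPolynomial ((ι ⊕ κ) × (ι ⊕ κ)) ℤ →+* R :=
    MvPolynomial.eval₂Hom (Int.castRingHom R) fun p => N p.1 p.2
  have hfX : f.mapMatrix X = N := mvPolynomialX_map_eval₂ _ N
  have := congrArg f hX
  rw [map_mul, map_pow, RingHom.map_det, RingHom.map_det, RingHom.map_det] at this
  rw [← hfX, ← RingHom.map_adjugate]
  exact this

end Jacobi

noncomputable def Fin.cornerEquiv (k : ℕ) : Fin 2 ⊕ Fin k ≃ Fin (k + 2) :=
  Equiv.ofBijective (Sum.elim ![0, Fin.last (k + 1)] fun i => i.castSucc.succ) <| by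
    rw [Fintype.bijective_iff_injective_and_card]
    refine ⟨Function.Injective.sumElim ?_ ((Fin.succ_injective _).comp (Fin.castSucc_injective _))
      ?_, by simp [add_comm]⟩
    · intro a b
      fin_cases a <;> fin_cases b <;> simp [Fin.ext_iff]
    · intro a b
      fin_cases a
      · simp [Fin.ext_iff]
      · simp [Fin.ext_iff]
        omega

theorem Matrix.det_desnanot_jacobi {R : Type*} [CommRing R] {k : ℕ}
    (M : Matrix (Fin (k + 2)) (Fin (k + 2)) R) :
    (M.submatrix Fin.castSucc Fin.castSucc).det * (M.submatrix Fin.succ Fin.succ).det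
      - (M.submatrix Fin.castSucc Fin.succ).det * (M.submatrix Fin.succ Fin.castSucc).det
      = M.det * (M.submatrix (fun i : Fin k => i.castSucc.succ) fun j => j.castSucc.succ).det := by
  have h := det_toBlocks₁₁_adjugate (M.submatrix (Fin.cornerEquiv k) (Fin.cornerEquiv k))
  have hinner : (M.submatrix (Fin.cornerEquiv k) (Fin.cornerEquiv k)).toBlocks₂₂ =
      M.submatrix (fun i : Fin k => i.castSucc.succ) fun j => j.castSucc.succ := rfl
  rw [adjugate_submatrix_equiv_self, det_submatrix_equiv_self, det_fin_two, hinner] at h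
  simp only [toBlocks₁₁, Fin.cornerEquiv, Equiv.coe_ofBijective, submatrix_apply, Sum.elim_inl,
    of_apply, cons_val_zero, cons_val_one, cons_val_fin_one, adjugate_fin_succ_eq_det_submatrix,
    Fin.succAbove_zero, Fin.succAbove_last, Fin.val_zero, Fin.val_last, add_zero, zero_add,
    Even.add_self, Even.neg_pow, one_pow, pow_zero, one_mul, Fintype.card_fin,
    Nat.add_one_sub_one, pow_one] at h
  have hsign : ((-1 : R) ^ (k + 1)) * (-1) ^ (k + 1) = 1 := by rw [← mul_pow]; simp
  linear_combination h + (M.submatrix Fin.castSucc Fin.succ).det *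
    (M.submatrix Fin.succ Fin.castSucc).det * hsign

def psiMatrix (k : ℕ) (v : ℕ → ℝ) (n : ℕ) : Matrix (Fin k) (Fin k) ℝ :=
  Matrix.of fun i j : Fin k => (Δ^[2 * i.val] v) (n + j.val)

section psiMatrix

variable (k : ℕ) (v : ℕ → ℝ) (n : ℕ)

theorem psi_eq_det_psiMatrix : Psi k v n = (psiMatrix k v n).det := rfl

theorem psiMatrix_submatrix_castSucc_castSucc :
    (psiMatrix (k + 1) v n).submatrix Fin.castSucc Fin.castSucc = psiMatrix k v n := rfl

theorem psiMatrix_submatrix_castSucc_succ :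
    (psiMatrix (k + 1) v n).submatrix Fin.castSucc Fin.succ = psiMatrix k v (n + 1) := by
  ext i j
  simp [psiMatrix, add_assoc, add_comm 1]

theorem psiMatrix_submatrix_succ_castSucc :
    (psiMatrix (k + 1) v n).submatrix Fin.succ Fin.castSucc = psiMatrix k (Δ^[2] v) n := by
  ext i j
  simp [psiMatrix, mul_add, Function.iterate_add_apply]

theorem psiMatrix_submatrix_succ_succ :
    (psiMatrix (k + 1) v n).submatrix Fin.succ Fin.succ = psiMatrix k (Δ^[2] v) (n + 1) := by
  ext i j
  simp [psiMatrix, mul_add, Function.iterate_add_apply, add_assoc, add_comm 1]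

theorem psi_desnanot_jacobi :
    Psi (k + 1) v n * Psi (k + 1) (Δ^[2] v) (n + 1)
      - Psi (k + 1) v (n + 1) * Psi (k + 1) (Δ^[2] v) n
      = Psi (k + 2) v n * Psi k (Δ^[2] v) (n + 1) := by
  have hinner : (psiMatrix (k + 2) v n).submatrix (fun i : Fin k => i.castSucc.succ)
      (fun j => j.castSucc.succ) = psiMatrix k (Δ^[2] v) (n + 1) := by
    rw [← psiMatrix_submatrix_castSucc_castSucc k, ← psiMatrix_submatrix_succ_succ (k + 1),
      submatrix_submatrix]
    rfl
  simpa only [psi_eq_det_psiMatrix, psiMatrix_submatrix_castSucc_castSucc,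
    psiMatrix_submatrix_castSucc_succ, psiMatrix_submatrix_succ_castSucc,
    psiMatrix_submatrix_succ_succ, hinner] using det_desnanot_jacobi (psiMatrix (k + 2) v n)

end psiMatrix

theorem stmt7 (S : ℕ → ℝ) (m : ℕ) (hm : 1 ≤ m) (n : ℕ) :
    Psi m (Δ S) n * Psi m (Δ^[3] S) (n + 1)
      - Psi m (Δ S) (n + 1) * Psi m (Δ^[3] S) n
      = Psi (m + 1) (Δ S) n * Psi (m - 1) (Δ^[3] S) (n + 1) := by
  obtain ⟨k, rfl⟩ := Nat.exists_eq_add_of_le' hm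
  exact psi_desnanot_jacobi k (Δ S) n
end

section
/- For every integer m ≥ 1 and every n ∈ ℕ, the determinant of the (m+1)×(m+1) matrix whose row 0 consists entirely of ones and whose (i,j) entry, for 1 ≤ i ≤ m and 0 ≤ j ≤ m, is (Δ^{2i} S)_{n+j} (i.e. rows Δ²S, Δ⁴S, …, Δ^{2m}S evaluated at columns n, n+1, …, n+m) equals Ψ_m(Δ³S)_n. -/
/-!
Subtracting from each column its predecessor (right to left) leaves the determinant unchanged.
This turns the row of ones into `(1, 0, …, 0)` and each entry `(Δ^{2i} S)_{n+j}` with `j ≥ 1`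
into `(Δ^{2i+1} S)_{n+j-1}`; expanding along the first row leaves the minor
`((Δ^{2i+3} S)_{n+j})_{0 ≤ i, j < m}`, which is `Ψ_m(Δ³S)_n`.
-/

namespace Matrix

variable {R : Type*} [CommRing R] {m : ℕ}

theorem det_eq_det_of_col_sub_pred (M : Matrix (Fin (m + 1)) (Fin (m + 1)) R) :
    M.det = (of fun i j => Fin.cases (M i 0) (fun j' => M i j'.succ - M i j'.castSucc) j).det :=
  det_eq_of_forall_col_eq_smul_add_pred (fun _ => 1) (fun _ => rfl) fun _ _ => by simp

theorem det_eq_det_submatrix_succ_of_row_zero {M : Matrix (Fin (m + 1)) (Fin (m + 1)) R}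
    (h₀ : M 0 0 = 1) (h_succ : ∀ j : Fin m, M 0 j.succ = 0) :
    M.det = (M.submatrix Fin.succ Fin.succ).det := by
  simp [det_succ_row_zero M, Fin.sum_univ_succ, h₀, h_succ]

end Matrix

theorem iterate_Δ_succ_apply (v : ℕ → ℝ) (k x : ℕ) :
    (Δ^[k + 1] v) x = (Δ^[k] v) (x + 1) - (Δ^[k] v) x := by
  rw [Function.iterate_succ_apply']
  rfl

theorem stmt10_general (S : ℕ → ℝ) (m : ℕ) (n : ℕ) :
    (Matrix.of fun i j : Fin (m + 1) =>
        if i.val = 0 then (1 : ℝ) else (Δ^[2 * i.val] S) (n + j.val)).det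
      = Psi m (Δ^[3] S) n := by
  rw [Matrix.det_eq_det_of_col_sub_pred, Matrix.det_eq_det_submatrix_succ_of_row_zero rfl
    fun j => by simp, Psi]
  congr 1
  ext i j
  have h_entry : (Δ^[2 * (i.val + 1)] S) (n + (j.val + 1)) - (Δ^[2 * (i.val + 1)] S) (n + j.val)
      = (Δ^[2 * i.val] (Δ^[3] S)) (n + j.val) := by
    rw [← Function.iterate_add_apply, ← add_assoc n, ← iterate_Δ_succ_apply]
    congr 2
  simpa using h_entry

theorem stmt10 (S : ℕ → ℝ) (m : ℕ) (hm : 1 ≤ m) (n : ℕ) :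
    (Matrix.of fun i j : Fin (m + 1) =>
        if i.val = 0 then (1 : ℝ) else (Δ^[2 * i.val] S) (n + j.val)).det
      = Psi m (Δ^[3] S) n :=
  stmt10_general S m n
end

section
/- For every integer m ≥ 1 and every n ∈ ℕ, the identity Ψ_m(Δ²S)_n · Φ_m(ΔS)_{n+1} − Ψ_{m−1}(Δ²S)_{n+1} · Φ_{m+1}(ΔS)_n = E_m(n) · Ψ_m(ΔS)_{n+1} holds, where E_m(n) denotes the determinant of the (m+1)×(m+1) matrix whose row 0 consists entirely of ones, whose row 1 has (1,j) entry n + j (as a real number) for 0 ≤ j ≤ m, and whose (i,j) entry, for 2 ≤ i ≤ m, is (Δ^{2i−3} S)_{n+j}. (This is the paper's instance of Schwein's determinantal identity used in the proof of Theorem 1.) -/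
/-- `Phi k v n` is the determinant of the `k × k` matrix whose row `0` is
`n, n+1, …, n+k-1` and whose `(i, j)` entry for `1 ≤ i` is `(Δ^[2*(i-1)] v) (n + j)`. -/
noncomputable def Phi (k : ℕ) (v : ℕ → ℝ) (n : ℕ) : ℝ :=
  (Matrix.of fun i j : Fin k =>
    if i.val = 0 then ((n + j.val : ℕ) : ℝ) else (Δ^[2 * (i.val - 1)] v) (n + j.val)).det

/-!
Consider the `(m + 2) × (m + 1)` Casorati matrix of the sequences `1, id, ΔS, Δ³S, …, Δ^{2m-1}S`
at `n`. Bordering it by the column `e_last` and applying the Desnanot–Jacobi identity gives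
Schwein's identity between six of its minors. These minors are `E_m(n)` and the `Ψ`, `Φ`
of the statement: for the two whose first row is constant `1`, subtracting each column from the
next turns `Δ^{2i-1}S` into `Δ^{2i}S`.
-/

namespace Matrix

variable {R : Type*} [CommRing R]

theorem det_eq_mul_det_submatrix_succ_of_col_zero {k : ℕ}
    (A : Matrix (Fin (k + 1)) (Fin (k + 1)) R) (h : ∀ i : Fin k, A i.succ 0 = 0) :
    A.det = A 0 0 * (A.submatrix Fin.succ Fin.succ).det := by
  simp [det_succ_column_zero A, Fin.sum_univ_succ, h]

theorem det_eq_of_forall_col_succ_succ_eq_one {k : ℕ} (Z : Matrix (Fin (k + 2)) (Fin (k + 2)) R)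
    (h : ∀ i (j : Fin k), Z i j.succ.succ = (1 : Matrix _ _ R) i j.succ.succ) :
    Z.det = Z 0 0 * Z 1 1 - Z 0 1 * Z 1 0 := by
  induction k with
  | zero => exact det_fin_two Z
  | succ k ih =>
    have hlast : ∀ i, Z i (Fin.last (k + 2)) = if i = Fin.last (k + 2) then 1 else 0 := fun i =>
      (h i (Fin.last k)).trans one_apply
    rw [det_succ_column Z (Fin.last (k + 2)), Finset.sum_eq_single (Fin.last (k + 2))
      (fun i _ hi => by simp [hlast, hi]) (by simp), hlast, if_pos rfl, ← two_mul, pow_mul,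
      neg_one_sq, one_pow, one_mul, one_mul, Fin.succAbove_last, ih]
    · simp
    · intro i j
      have hij := h i.castSucc j.castSucc
      rw [Fin.succ_castSucc, Fin.succ_castSucc] at hij
      rw [submatrix_apply, hij]
      simp only [one_apply, Fin.castSucc_inj]

theorem det_mul_det_mul_det_submatrix_succ_succ {k : ℕ}
    (M : Matrix (Fin (k + 2)) (Fin (k + 2)) R) :
    M.det * (M.det * (M.submatrix (Fin.succ ∘ Fin.succ) (Fin.succ ∘ Fin.succ)).det) =
      M.det * (adjugate M 0 0 * adjugate M 1 1 - adjugate M 0 1 * adjugate M 1 0) := by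
  -- `M * Z` has columns `det M • e₀, det M • e₁` followed by the columns of `M`.
  let Z : Matrix (Fin (k + 2)) (Fin (k + 2)) R :=
    of fun i j => if (j : ℕ) < 2 then adjugate M i j else (1 : Matrix _ _ R) i j
  have hMZ : ∀ i j,
      (M * Z) i j = if (j : ℕ) < 2 then M.det * (1 : Matrix _ _ R) i j else M i j := by
    intro i j
    split_ifs with hj
    · rw [← smul_eq_mul (M.det), ← smul_apply, ← mul_adjugate]
      simp only [Z, mul_apply, of_apply, if_pos hj]
    · simp only [Z, mul_apply, of_apply, if_neg hj]
      rw [← mul_apply, mul_one]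
  have hZ : Z.det = adjugate M 0 0 * adjugate M 1 1 - adjugate M 0 1 * adjugate M 1 0 :=
    det_eq_of_forall_col_succ_succ_eq_one Z fun i j => by simp [Z]
  have hMZdet : (M * Z).det =
      M.det * (M.det * (M.submatrix (Fin.succ ∘ Fin.succ) (Fin.succ ∘ Fin.succ)).det) := by
    rw [det_eq_mul_det_submatrix_succ_of_col_zero _ fun i => by simp [hMZ],
      det_eq_mul_det_submatrix_succ_of_col_zero _ fun i => by simp [hMZ, Fin.succ_succ_ne_one],
      submatrix_submatrix]
    have hcorner : (M * Z).submatrix (Fin.succ ∘ Fin.succ) (Fin.succ ∘ Fin.succ) =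
        M.submatrix (Fin.succ ∘ Fin.succ) (Fin.succ ∘ Fin.succ) := by
      ext i j
      simp [hMZ]
    simp [hMZ, hcorner]
  rw [← hMZdet, det_mul, hZ]

/-- The Desnanot–Jacobi identity. -/
theorem det_mul_det_submatrix_succ_succ {k : ℕ} (M : Matrix (Fin (k + 2)) (Fin (k + 2)) R) :
    M.det * (M.submatrix (Fin.succ ∘ Fin.succ) (Fin.succ ∘ Fin.succ)).det =
      (M.submatrix Fin.succ Fin.succ).det * (M.submatrix (Fin.succAbove 1) (Fin.succAbove 1)).det -
        (M.submatrix Fin.succ (Fin.succAbove 1)).det *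
          (M.submatrix (Fin.succAbove 1) Fin.succ).det := by
  -- Cancel `det` for the generic matrix `X + M` over `R[X]`, whose determinant is monic,
  -- then specialise `X = 0`.
  have hgeneric := det_mul_det_mul_det_submatrix_succ_succ (charmatrix (-M))
  simp only [adjugate_fin_succ_eq_det_submatrix, Fin.succAbove_zero, Fin.val_zero, Fin.val_one]
    at hgeneric
  norm_num at hgeneric
  have hspec : (charmatrix (-M)).map (Polynomial.evalRingHom 0) = M := by
    ext i j
    by_cases hij : i = j
    · subst hij; simp [charmatrix_apply_eq]
    · simp [charmatrix_apply_ne _ _ _ hij]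
  have := congrArg (Polynomial.evalRingHom (0 : R))
    ((charpoly_monic (-M)).isRegular.left hgeneric)
  simp only [_root_.map_mul, _root_.map_sub, RingHom.map_det, RingHom.mapMatrix_apply,
    ← submatrix_map, hspec] at this
  rw [this, mul_comm (M.submatrix (Fin.succAbove 1) Fin.succ).det]

theorem det_eq_neg_one_pow_mul_det_of_col_zero_eq_single_last {k : ℕ}
    (A : Matrix (Fin (k + 1)) (Fin (k + 1)) R)
    (h : ∀ i, A i 0 = if i = Fin.last k then 1 else 0) :
    A.det = (-1) ^ k * (A.submatrix Fin.castSucc Fin.succ).det := by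
  rw [det_succ_column_zero, Finset.sum_eq_single (Fin.last k) (fun i _ hi => by simp [h, hi])
    (by simp), h, if_pos rfl, mul_one, Fin.val_last, Fin.succAbove_last]

theorem schwein_identity {k : ℕ} (A : Matrix (Fin (k + 3)) (Fin (k + 2)) R) :
    (A.submatrix Fin.castSucc id).det * (A.submatrix (Fin.succ ∘ Fin.succ) Fin.succ).det =
      (A.submatrix (Fin.succ ∘ Fin.castSucc) Fin.succ).det *
          (A.submatrix (Fin.succAbove 1) id).det -
        (A.submatrix Fin.succ id).det *
          (A.submatrix (Fin.castSucc ∘ Fin.succAbove 1) Fin.succ).det := by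
  let M : Matrix (Fin (k + 3)) (Fin (k + 3)) R :=
    of fun i => Fin.cons (if i = Fin.last (k + 2) then 1 else 0) (A i)
  have hlast : (1 : Fin (k + 3)) ≠ Fin.last (k + 2) := by simp [Fin.ext_iff]
  have hdet : M.det = (-1) ^ (k + 2) * (A.submatrix Fin.castSucc id).det := by
    rw [det_eq_neg_one_pow_mul_det_of_col_zero_eq_single_last M fun i => by simp [M]]
    rfl
  have h00 : M.submatrix Fin.succ Fin.succ = A.submatrix Fin.succ id := by ext; simp [M]
  have h10 : M.submatrix (Fin.succAbove 1) Fin.succ = A.submatrix (Fin.succAbove 1) id := by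
    ext; simp [M]
  have h11 : (M.submatrix (Fin.succAbove 1) (Fin.succAbove 1)).det =
      (-1) ^ (k + 1) * (A.submatrix (Fin.castSucc ∘ Fin.succAbove 1) Fin.succ).det := by
    rw [det_eq_neg_one_pow_mul_det_of_col_zero_eq_single_last _ fun i => by
      simp [M, Fin.succAbove_eq_last_iff hlast]]
    congr 2
    ext i j
    simp [M]
    rw [← Fin.castSucc_one, Fin.castSucc_succAbove_castSucc]
  have h01 : (M.submatrix Fin.succ (Fin.succAbove 1)).det =
      (-1) ^ (k + 1) * (A.submatrix (Fin.succ ∘ Fin.castSucc) Fin.succ).det := by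
    rw [det_eq_neg_one_pow_mul_det_of_col_zero_eq_single_last _ fun i => by simp [M]]
    rfl
  have hcorner : M.submatrix (Fin.succ ∘ Fin.succ) (Fin.succ ∘ Fin.succ) =
      A.submatrix (Fin.succ ∘ Fin.succ) Fin.succ := by ext; simp [M]
  have hdj := det_mul_det_submatrix_succ_succ M
  rw [hdet, h00, h10, h11, h01, hcorner] at hdj
  rcases neg_one_pow_eq_or R (k + 1) with hsign | hsign
  · rw [pow_succ, hsign] at hdj
    linear_combination -hdj
  · rw [pow_succ, hsign] at hdj
    linear_combination hdj

end Matrix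

def casorati {ι R : Type*} {k : ℕ} (f : ι → ℕ → R) (n : ℕ) : Matrix ι (Fin k) R :=
  Matrix.of fun i j => f i (n + j)

section Casorati

variable {ι κ R : Type*} {k : ℕ}

theorem casorati_comp (f : ι → ℕ → R) (r : κ → ι) (n : ℕ) :
    casorati (k := k) (f ∘ r) n = (casorati f n).submatrix r id :=
  rfl

theorem casorati_comp_add_one (f : ι → ℕ → R) (r : κ → ι) (n : ℕ) :
    casorati (k := k) (f ∘ r) (n + 1) = (casorati f n).submatrix r Fin.succ := by
  ext i j
  simp only [casorati, Matrix.of_apply, Matrix.submatrix_apply, Function.comp_apply, Fin.val_succ]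
  ring_nf

end Casorati

theorem det_casorati_eq_of_row_zero_eq_one {k : ℕ} (g : Fin (k + 1) → ℕ → ℝ)
    (hg : g 0 = fun _ => 1) (n : ℕ) :
    (casorati g n).det = (casorati (fun i : Fin k => Δ (g i.succ)) n).det := by
  let B : Matrix (Fin (k + 1)) (Fin (k + 1)) ℝ :=
    Matrix.of fun i => Fin.cons (g i n) fun j => Δ (g i) (n + j)
  have hcol : (casorati g n).det = B.det :=
    Matrix.det_eq_of_forall_col_eq_smul_add_pred (fun _ => 1) (fun i => by simp [casorati, B])
      fun i j => by simp [casorati, B, Δ, add_assoc]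
  rw [hcol, Matrix.det_succ_row_zero, Fin.sum_univ_succ]
  simp [B, hg, Δ]
  rfl

/-- Row `i` of the matrix `E_m(n)` of the statement, as a function of the column argument. -/
def schweinRow (S : ℕ → ℝ) (i : ℕ) : ℕ → ℝ :=
  fun x => if i = 0 then 1 else if i = 1 then (x : ℝ) else Δ^[2 * i - 3] S x

theorem schweinRow_add_two (S : ℕ → ℝ) (i : ℕ) : schweinRow S (i + 2) = Δ^[2 * i] (Δ S) := by
  funext x
  rw [schweinRow, if_neg (by omega), if_neg (by omega),
    show 2 * (i + 2) - 3 = 2 * i + 1 by omega, Function.iterate_succ_apply]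

theorem schweinRow_add_one (S : ℕ → ℝ) (i : ℕ) :
    schweinRow S (i + 1) = fun x : ℕ => if i = 0 then (x : ℝ) else Δ^[2 * (i - 1)] (Δ S) x := by
  rcases i with _ | i
  · rfl
  · simp [schweinRow_add_two]

theorem det_casorati_schweinRow_succ (S : ℕ → ℝ) (k n : ℕ) :
    (casorati (fun i : Fin k => schweinRow S i.succ) n).det = Phi k (Δ S) n := by
  simp only [Fin.val_succ, schweinRow_add_one]
  rfl

theorem det_casorati_schweinRow_succ_succ (S : ℕ → ℝ) (k n : ℕ) :
    (casorati (fun i : Fin k => schweinRow S i.succ.succ) n).det = Psi k (Δ S) n := by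
  simp only [Fin.val_succ, schweinRow_add_two]
  rfl

theorem det_casorati_schweinRow_succAbove_one (S : ℕ → ℝ) (k n : ℕ) :
    (casorati (fun i : Fin (k + 1) => schweinRow S ((1 : Fin (k + 2)).succAbove i)) n).det =
      Psi k (Δ^[2] S) n := by
  rw [det_casorati_eq_of_row_zero_eq_one _ rfl]
  simp only [Fin.one_succAbove_succ, Fin.val_succ, schweinRow_add_two,
    ← Function.iterate_succ_apply' Δ]
  rfl

theorem stmt12 (S : ℕ → ℝ) (m : ℕ) (hm : 1 ≤ m) (n : ℕ) :
    Psi m (Δ^[2] S) n * Phi m (Δ S) (n + 1)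
      - Psi (m - 1) (Δ^[2] S) (n + 1) * Phi (m + 1) (Δ S) n
      = (Matrix.of fun i j : Fin (m + 1) =>
          if i.val = 0 then (1 : ℝ)
          else if i.val = 1 then ((n + j.val : ℕ) : ℝ)
          else (Δ^[2 * i.val - 3] S) (n + j.val)).det
        * Psi m (Δ S) (n + 1) := by
  obtain ⟨q, rfl⟩ := Nat.exists_eq_add_of_le' hm
  have key := Matrix.schwein_identity (casorati (fun i : Fin (q + 3) => schweinRow S i) n)
  simp only [← casorati_comp, ← casorati_comp_add_one, Function.comp_def, Fin.val_castSucc,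
    Fin.succ_castSucc, det_casorati_schweinRow_succ, det_casorati_schweinRow_succ_succ,
    det_casorati_schweinRow_succAbove_one] at key
  show Psi (q + 1) (Δ^[2] S) n * Phi (q + 1) (Δ S) (n + 1) -
      Psi q (Δ^[2] S) (n + 1) * Phi (q + 2) (Δ S) n =
    (casorati (fun i : Fin (q + 2) => schweinRow S i) n).det * Psi (q + 1) (Δ S) (n + 1)
  linear_combination -key
end
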